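/- arXiv:math/0503224 — 3 statements merged into one kernel-verified Lean document; each statement's English description precedes it below -/
import Mathlib

section
/- For all P, Q ∈ M_N(ℂ) and all indices i, k ∈ {1,…,N}: if i ≤ k then (P • Q)_{ik} = (P_≤ Q_≤)_{ik}, and if i > k then (P • Q)_{ik} = (P_≤ Q)_{ik} + (P Q_≤)_{ik}, where juxtaposition denotes the ordinary matrix product. (This expresses the isomorphism of (M_N(ℂ), •) with the semidirect product of the algebra of upper triangular matrices with the quotient bimodule M_N(ℂ)/R_N(ℂ).) -/
open Matrix BigOperators Finset

/-- `cyc3 i j k` : the sequence `(i,j,k)` of indices is cyclically ordered `⟨i ≤ j ≤ k⟩`,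
i.e. some cyclic rotation of it is weakly increasing, with all entries required to be
equal when the first and last entries coincide. -/
def cyc3 {N : ℕ} (i j k : Fin N) : Prop :=
  if i = k then j = i
  else (i ≤ j ∧ j ≤ k) ∨ (j ≤ k ∧ k ≤ i) ∨ (k ≤ i ∧ i ≤ j)

instance cyc3.dec {N : ℕ} (i j k : Fin N) : Decidable (cyc3 i j k) := by
  unfold cyc3; infer_instance

/-- The degenerate product `•` on `N × N` complex matrices:
`(P • Q)_{ik} = ∑_{j : ⟨i ≤ j ≤ k⟩} P_{ij} Q_{jk}`. -/
noncomputable def cprod {N : ℕ} (P Q : Matrix (Fin N) (Fin N) ℂ) :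
    Matrix (Fin N) (Fin N) ℂ :=
  Matrix.of fun i k => ∑ j ∈ Finset.univ.filter (fun j => cyc3 i j k), P i j * Q j k

/-- `upperTri M` is the weak upper triangle `M_≤` of `M`:
`(M_≤)_{ij} = M_{ij}` if `i ≤ j`, and `0` if `i > j`. -/
noncomputable def upperTri {N : ℕ} (M : Matrix (Fin N) (Fin N) ℂ) :
    Matrix (Fin N) (Fin N) ℂ :=
  Matrix.of fun i j => if i ≤ j then M i j else 0

section

variable {N : ℕ}

lemma cyc3_iff_of_le {i k : Fin N} (hik : i ≤ k) (j : Fin N) :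
    cyc3 i j k ↔ i ≤ j ∧ j ≤ k := by
  unfold cyc3
  split_ifs with hik'
  · subst hik'
    constructor
    · rintro rfl
      exact ⟨le_rfl, le_rfl⟩
    · rintro ⟨hij, hji⟩
      exact le_antisymm hji hij
  · have hlt : i < k := lt_of_le_of_ne hik hik'
    constructor
    · rintro (h | ⟨_, hki⟩ | ⟨hki, _⟩)
      · exact h
      · exact absurd hki hlt.not_ge
      · exact absurd hki hlt.not_ge
    · exact Or.inl

lemma cyc3_iff_of_lt {i k : Fin N} (hki : k < i) (j : Fin N) :
    cyc3 i j k ↔ j ≤ k ∨ i ≤ j := by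
  unfold cyc3
  rw [if_neg hki.ne']
  constructor
  · rintro (⟨hij, hjk⟩ | ⟨hjk, _⟩ | ⟨_, hij⟩)
    · exact absurd ((hij.trans hjk).trans_lt hki) (lt_irrefl i)
    · exact Or.inl hjk
    · exact Or.inr hij
  · rintro (hjk | hij)
    · exact Or.inr (Or.inl ⟨hjk, hki.le⟩)
    · exact Or.inr (Or.inr ⟨hki.le, hij⟩)

lemma cprod_apply (P Q : Matrix (Fin N) (Fin N) ℂ) (i k : Fin N) :
    cprod P Q i k = ∑ j, if cyc3 i j k then P i j * Q j k else 0 := by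
  simp only [cprod, of_apply, Finset.sum_filter]

lemma upperTri_apply (M : Matrix (Fin N) (Fin N) ℂ) (i j : Fin N) :
    upperTri M i j = if i ≤ j then M i j else 0 :=
  rfl

lemma cprod_apply_of_le (P Q : Matrix (Fin N) (Fin N) ℂ) {i k : Fin N} (hik : i ≤ k) :
    cprod P Q i k = (upperTri P * upperTri Q) i k := by
  rw [cprod_apply, mul_apply]
  refine Finset.sum_congr rfl fun j _ => ?_
  simp only [cyc3_iff_of_le hik, upperTri_apply, ite_mul, zero_mul, mul_ite, mul_zero]
  by_cases hij : i ≤ j <;> by_cases hjk : j ≤ k <;> simp [hij, hjk]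

/-- Below the diagonal the cyclic interval `⟨i ≤ j ≤ k⟩` splits into the disjoint
pieces `i ≤ j` and `j ≤ k`. -/
lemma cprod_apply_of_lt (P Q : Matrix (Fin N) (Fin N) ℂ) {i k : Fin N} (hki : k < i) :
    cprod P Q i k = (upperTri P * Q) i k + (P * upperTri Q) i k := by
  rw [cprod_apply, mul_apply, mul_apply, ← Finset.sum_add_distrib]
  refine Finset.sum_congr rfl fun j _ => ?_
  simp only [cyc3_iff_of_lt hki, upperTri_apply, ite_mul, zero_mul, mul_ite, mul_zero]
  by_cases hij : i ≤ j
  · have hjk : ¬ j ≤ k := fun hjk => (hij.trans hjk).not_gt hki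
    simp [hij, hjk]
  · by_cases hjk : j ≤ k <;> simp [hij, hjk]

end

theorem brauer_cprod_semidirect_general (N : ℕ)
    (P Q : Matrix (Fin N) (Fin N) ℂ) (i k : Fin N) :
    (i ≤ k → cprod P Q i k = (upperTri P * upperTri Q) i k) ∧
    (k < i → cprod P Q i k = (upperTri P * Q) i k + (P * upperTri Q) i k) :=
  ⟨cprod_apply_of_le P Q, cprod_apply_of_lt P Q⟩

/-- For `i ≤ k` one has `(P • Q)_{ik} = (P_≤ Q_≤)_{ik}`, and for `i > k` one has
`(P • Q)_{ik} = (P_≤ Q)_{ik} + (P Q_≤)_{ik}` (ordinary matrix products on the right);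
this is the semidirect product model of `(M_N(ℂ), •)`. -/
theorem brauer_cprod_semidirect (N : ℕ) (hN : 0 < N)
    (P Q : Matrix (Fin N) (Fin N) ℂ) (i k : Fin N) :
    (i ≤ k → cprod P Q i k = (upperTri P * upperTri Q) i k) ∧
    (k < i → cprod P Q i k = (upperTri P * Q) i k + (P * upperTri Q) i k) :=
  brauer_cprod_semidirect_general N P Q i k
end

section
/- Let N ≥ 2, let i ∈ {1,…,N} (indices mod N), and let C, D ∈ M_N(ℂ) have zero diagonal. Then for all j, m ∈ {1,…,N}: (a) ((e^{i+1,i} C) • D)_{jm} = (e^{i+1,i} (C • D))_{jm} + δ_{i,m} δ_{j,i+1} (CD)_{ii}; (b) (C • (D e^{i+1,i}))_{jm} = ((C • D) e^{i+1,i})_{jm} + δ_{i,m} δ_{j,i+1} (CD)_{i+1,i+1}; (c) ((C e^{i+1,i}) • D)_{jm} = C_{j,i+1} D_{im} if ⟨j ≤ i ≤ m⟩ and 0 otherwise; (d) (C • (e^{i+1,i} D))_{jm} = C_{j,i+1} D_{im} if ⟨j ≤ i+1 ≤ m⟩ and 0 otherwise. If in addition C_{i,i+1} = 0, then ([e^{i+1,i},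 C] • [e^{i+1,i}, C])_{jm} = −δ_{j,i+1} δ_{i,m} (C²)_{i,i+1}. Here juxtaposition, [·,·], and C² denote the ordinary matrix product, commutator, and square. -/
open Matrix BigOperators Finset

/-! Multiplying by `e^{i+1,i}` on the left of the first factor (or on the right of the second)
moves one end of the summation arc of `•` by one step. For `m ≠ i` the arc `⟨i ≤ k ≤ m⟩` is the
arc `⟨i+1 ≤ k ≤ m⟩` together with `k = i`, whose term vanishes because the diagonal is zero;
for `m = i` the arc `⟨i+1 ≤ k ≤ i⟩` is the whole circle while `⟨i ≤ k ≤ i⟩ = {i}`, which produces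
the correction term `(CD)_{ii}`. The commutator identity is an entrywise computation in which only
the products over the full arc `⟨i+1 ≤ k ≤ i⟩` survive. -/

variable {N : ℕ}

section CyclicOrder

lemma cyc3_self_iff (a b : Fin N) : cyc3 a b a ↔ b = a := by
  simp [cyc3]

lemma cyc3_iff_val (a b c : Fin N) : cyc3 a b c ↔
    if a.val = c.val then b.val = a.val
    else (a.val ≤ b.val ∧ b.val ≤ c.val) ∨ (b.val ≤ c.val ∧ c.val ≤ a.val) ∨
      (c.val ≤ a.val ∧ a.val ≤ b.val) := by
  simp only [cyc3, Fin.ext_iff, Fin.le_def]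

lemma filter_cyc3_self (a : Fin N) : univ.filter (cyc3 a · a) = {a} := by
  ext k; simp [cyc3_self_iff]

variable [NeZero N]

lemma Fin.val_add_one_eq_or (i : Fin N) :
    (i + 1).val = i.val + 1 ∨ (i.val + 1 = N ∧ (i + 1).val = 0) := by
  rcases (Nat.succ_le_of_lt i.isLt).lt_or_eq with h | h
  · exact .inl (Fin.val_add_one_of_lt' h)
  · exact .inr ⟨h, by simp [Fin.val_add, show i.val + 1 = N from h]⟩

lemma cyc3_add_one_self (i k : Fin N) : cyc3 (i + 1) k i := by
  have := Fin.val_add_one_eq_or i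
  have := k.isLt
  rw [cyc3_iff_val]
  split_ifs <;> omega

lemma cyc3_iff_eq_or_cyc3_add_one (i k m : Fin N) (hm : m ≠ i) :
    cyc3 i k m ↔ k = i ∨ cyc3 (i + 1) k m := by
  have := Fin.val_add_one_eq_or i
  have := k.isLt; have := m.isLt
  have := Fin.val_ne_of_ne hm
  rw [cyc3_iff_val, cyc3_iff_val, Fin.ext_iff]
  split_ifs <;> omega

lemma cyc3_add_one_iff_eq_or_cyc3 (i j k : Fin N) (hj : j ≠ i + 1) :
    cyc3 j k (i + 1) ↔ k = i + 1 ∨ cyc3 j k i := by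
  have := Fin.val_add_one_eq_or i
  have := k.isLt; have := j.isLt
  have := Fin.val_ne_of_ne hj
  rw [cyc3_iff_val, cyc3_iff_val, Fin.ext_iff]
  split_ifs <;> omega

lemma Fin.add_one_ne_self (hN : 2 ≤ N) (i : Fin N) : i + 1 ≠ i := by
  intro h
  have := congrArg Fin.val h
  rcases Fin.val_add_one_eq_or i with h | h <;> omega

end CyclicOrder

section Single

variable {l m n α : Type*} [Fintype m] [DecidableEq m] [Semiring α]

lemma Matrix.single_one_mul_apply [DecidableEq l] (a : l) (b : m) (M : Matrix m n α)
    (j : l) (k : n) :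
    (single a b (1 : α) * M) j k = if j = a then M b k else 0 := by
  split_ifs with h
  · rw [h, single_mul_apply_same, one_mul]
  · exact single_mul_apply_of_ne _ _ _ _ _ h _

lemma Matrix.mul_single_one_apply [DecidableEq n] (a : m) (b : n) (M : Matrix l m α)
    (j : l) (k : n) :
    (M * single a b (1 : α)) j k = if k = b then M j a else 0 := by
  split_ifs with h
  · rw [h, mul_single_apply_same, mul_one]
  · exact mul_single_apply_of_ne _ _ _ _ _ h _

end Single

section CyclicSums

variable [NeZero N] {M : Type*} [AddCommMonoid M]

lemma filter_cyc3_add_one_self (i : Fin N) : univ.filter (cyc3 (i + 1) · i) = univ :=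
  filter_true_of_mem fun k _ => cyc3_add_one_self i k

lemma sum_filter_cyc3_add_one_left (i m : Fin N) (f : Fin N → M) (hf : f i = 0) :
    ∑ k ∈ univ.filter (cyc3 (i + 1) · m), f k =
      (∑ k ∈ univ.filter (cyc3 i · m), f k) + if m = i then ∑ k, f k else 0 := by
  by_cases hm : m = i
  · subst hm
    rw [filter_cyc3_add_one_self, filter_cyc3_self, sum_singleton, hf, if_pos rfl, zero_add]
  · have : univ.filter (cyc3 i · m) = insert i (univ.filter (cyc3 (i + 1) · m)) := by
      ext k; simp [cyc3_iff_eq_or_cyc3_add_one i k m hm]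
    rw [this, sum_insert_of_eq_zero_if_notMem fun _ => hf, if_neg hm, add_zero]

lemma sum_filter_cyc3_add_one_right (i j : Fin N) (f : Fin N → M) (hf : f (i + 1) = 0) :
    ∑ k ∈ univ.filter (cyc3 j · i), f k =
      (∑ k ∈ univ.filter (cyc3 j · (i + 1)), f k) + if j = i + 1 then ∑ k, f k else 0 := by
  by_cases hj : j = i + 1
  · subst hj
    rw [filter_cyc3_add_one_self, filter_cyc3_self, sum_singleton, hf, if_pos rfl, zero_add]
  · have : univ.filter (cyc3 j · (i + 1)) = insert (i + 1) (univ.filter (cyc3 j · i)) := by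
      ext k; simp [cyc3_add_one_iff_eq_or_cyc3 i j k hj]
    rw [this, sum_insert_of_eq_zero_if_notMem fun _ => hf, if_neg hj, add_zero]

end CyclicSums

section CprodSingle

variable (P Q : Matrix (Fin N) (Fin N) ℂ) (a b j m : Fin N)

lemma cprod_apply_s8 : cprod P Q j m = ∑ k ∈ univ.filter (cyc3 j · m), P j k * Q k m := rfl

lemma cprod_single_mul_left_apply :
    cprod (single a b 1 * P) Q j m =
      if j = a then ∑ k ∈ univ.filter (cyc3 a · m), P b k * Q k m else 0 := by
  split_ifs with h
  · subst h; simp only [cprod_apply_s8, single_one_mul_apply, if_pos]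
  · simp [cprod_apply_s8, h]

lemma cprod_mul_single_right_apply :
    cprod P (Q * single a b 1) j m =
      if m = b then ∑ k ∈ univ.filter (cyc3 j · b), P j k * Q k a else 0 := by
  split_ifs with h
  · subst h; simp only [cprod_apply_s8, mul_single_one_apply, if_pos]
  · simp [cprod_apply_s8, h]

lemma cprod_mul_single_left_apply :
    cprod (P * single a b 1) Q j m = if cyc3 j b m then P j a * Q b m else 0 := by
  simp [cprod_apply_s8, mul_single_one_apply]

lemma cprod_single_mul_right_apply :
    cprod P (single a b 1 * Q) j m = if cyc3 j a m then P j a * Q b m else 0 := by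
  simp [cprod_apply_s8, single_one_mul_apply]

end CprodSingle

section Commutator

variable (a b : Fin N) (C : Matrix (Fin N) (Fin N) ℂ)

lemma commutator_single_one_apply (j k : Fin N) :
    (single a b 1 * C - C * single a b 1 : Matrix (Fin N) (Fin N) ℂ) j k =
      (if j = a then C b k else 0) - if k = b then C j a else 0 := by
  rw [Matrix.sub_apply, single_one_mul_apply, mul_single_one_apply]

lemma commutator_single_one_mul_commutator_apply (hab : a ≠ b) (hC : ∀ j, C j j = 0)
    (hCba : C b a = 0) (j k m : Fin N) :
    (single a b 1 * C - C * single a b 1 : Matrix (Fin N) (Fin N) ℂ) j k *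
        (single a b 1 * C - C * single a b 1 : Matrix (Fin N) (Fin N) ℂ) k m =
      -if j = a ∧ m = b then C b k * C k a else 0 := by
  simp only [commutator_single_one_apply]
  by_cases hj : j = a <;> by_cases hm : m = b <;> by_cases hka : k = a <;> by_cases hkb : k = b <;>
    simp_all

end Commutator

section Identities

variable [NeZero N] (i : Fin N) (C D : Matrix (Fin N) (Fin N) ℂ)

lemma cprod_single_mul_left_eq_mul_cprod (hC : C i i = 0) (j m : Fin N) :
    cprod (single (i + 1) i 1 * C) D j m =
      (single (i + 1) i (1 : ℂ) * cprod C D) j m +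
        if j = i + 1 ∧ m = i then (C * D) i i else 0 := by
  rw [cprod_single_mul_left_apply, single_one_mul_apply]
  split_ifs with hj hjm hjm
  · obtain ⟨-, rfl⟩ := hjm
    rw [sum_filter_cyc3_add_one_left m m _ (by rw [hC, zero_mul]), if_pos rfl]; rfl
  · rw [sum_filter_cyc3_add_one_left i m _ (by rw [hC, zero_mul]), if_neg (hjm ⟨hj, ·⟩)]; rfl
  · exact absurd hjm.1 hj
  · rw [add_zero]

lemma cprod_mul_single_right_eq_cprod_mul (hD : D (i + 1) (i + 1) = 0) (j m : Fin N) :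
    cprod C (D * single (i + 1) i 1) j m =
      (cprod C D * single (i + 1) i (1 : ℂ)) j m +
        if j = i + 1 ∧ m = i then (C * D) (i + 1) (i + 1) else 0 := by
  rw [cprod_mul_single_right_apply, mul_single_one_apply]
  split_ifs with hm hjm hjm
  · obtain ⟨rfl, -⟩ := hjm
    rw [sum_filter_cyc3_add_one_right i _ _ (by rw [hD, mul_zero]), if_pos rfl]; rfl
  · rw [sum_filter_cyc3_add_one_right i j _ (by rw [hD, mul_zero]), if_neg (hjm ⟨·, hm⟩)]; rfl
  · exact absurd hjm.2 hm
  · rw [add_zero]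

lemma cprod_commutator_single_commutator_apply (hi : i + 1 ≠ i) (hC : ∀ j, C j j = 0)
    (hCi : C i (i + 1) = 0) (j m : Fin N) :
    cprod (single (i + 1) i 1 * C - C * single (i + 1) i 1)
        (single (i + 1) i 1 * C - C * single (i + 1) i 1) j m =
      -if j = i + 1 ∧ m = i then (C * C) i (i + 1) else 0 := by
  simp only [cprod_apply_s8, commutator_single_one_mul_commutator_apply _ _ _ hi hC hCi,
    sum_neg_distrib]
  split_ifs with h
  · obtain ⟨rfl, rfl⟩ := h
    rw [filter_cyc3_add_one_self]; rfl
  · rw [sum_const_zero]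

end Identities

/-- The technical identities of the paper's Lemma on `e^{i+1,i}` (indices mod `N`):
for zero-diagonal `C, D` and `E = e^{i+1,i}`, entrywise
`((E C) • D)_{jm} = (E (C • D))_{jm} + δ_{i,m} δ_{j,i+1} (CD)_{ii}`,
`(C • (D E))_{jm} = ((C • D) E)_{jm} + δ_{i,m} δ_{j,i+1} (CD)_{i+1,i+1}`,
`((C E) • D)_{jm} = C_{j,i+1} D_{im} [⟨j ≤ i ≤ m⟩]`,
`(C • (E D))_{jm} = C_{j,i+1} D_{im} [⟨j ≤ i+1 ≤ m⟩]`,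
and, if moreover `C_{i,i+1} = 0`,
`([E,C] • [E,C])_{jm} = −δ_{j,i+1} δ_{i,m} (C²)_{i,i+1}`
(juxtaposition, `[·,·]` and `C²` denote ordinary matrix operations). -/
theorem brauer_assoc_lemma (N : ℕ) [NeZero N] (hN : 2 ≤ N) (i : Fin N)
    (C D : Matrix (Fin N) (Fin N) ℂ)
    (hC : ∀ j, C j j = 0) (hD : ∀ j, D j j = 0)
    (E : Matrix (Fin N) (Fin N) ℂ)
    (hE : E = Matrix.single (i + 1) i (1 : ℂ)) :
    (∀ j m : Fin N,
      cprod (E * C) D j m =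
        (E * cprod C D) j m + (if j = i + 1 ∧ m = i then (C * D) i i else 0)) ∧
    (∀ j m : Fin N,
      cprod C (D * E) j m =
        (cprod C D * E) j m +
          (if j = i + 1 ∧ m = i then (C * D) (i + 1) (i + 1) else 0)) ∧
    (∀ j m : Fin N,
      cprod (C * E) D j m = if cyc3 j i m then C j (i + 1) * D i m else 0) ∧
    (∀ j m : Fin N,
      cprod C (E * D) j m = if cyc3 j (i + 1) m then C j (i + 1) * D i m else 0) ∧
    (C i (i + 1) = 0 → ∀ j m : Fin N,
      cprod (E * C - C * E) (E * C - C * E) j m =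
        -(if j = i + 1 ∧ m = i then (C * C) i (i + 1) else 0)) := by
  subst hE
  exact ⟨cprod_single_mul_left_eq_mul_cprod i C D (hC i),
    cprod_mul_single_right_eq_cprod_mul i C D (hD _),
    cprod_mul_single_left_apply C D _ i, cprod_single_mul_right_apply C D (i + 1) i,
    cprod_commutator_single_commutator_apply i C (Fin.add_one_ne_self hN i) hC⟩
end

section
/- Write N = 2n + r with r ∈ {0,1}, and let π be a link pattern (involution of {1,…,N} with exactly r fixed points). Let t_1,…,t_N ∈ ℂ be all nonzero and satisfy t_i t_{π(i)} ≠ t_k t_{π(k)} whenever k ∉ {i, π(i)}, and let A ∈ M_N(ℂ) be the matrix with A_{ij} = t_j if j = π(i) and j ≠ i, and A_{ij} = 0 otherwise (i.e., A = π̲ t for t the diagonal matrix diag(t_1,…,t_N)). Then the kernel of the ℂ-linear map P ↦ P • A + A • P on the space of zero-diagonal matrices {P ∈ M_N(ℂ) : P_{ii} = 0 for all i} has dimension ⌊N²/2⌋. (This is the Zariski tangent space computation showing the component E_π of the Brauer loop scheme is generically reduced.) -/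
open Matrix BigOperators Finset

lemma cprod_add_left {N : ℕ} (P Q A : Matrix (Fin N) (Fin N) ℂ) :
    cprod (P + Q) A = cprod P A + cprod Q A := by
  ext i k
  simp only [cprod, Matrix.of_apply, Matrix.add_apply, ← Finset.sum_add_distrib]
  exact Finset.sum_congr rfl fun j _ => by ring

lemma cprod_add_right {N : ℕ} (A P Q : Matrix (Fin N) (Fin N) ℂ) :
    cprod A (P + Q) = cprod A P + cprod A Q := by
  ext i k
  simp only [cprod, Matrix.of_apply, Matrix.add_apply, ← Finset.sum_add_distrib]
  exact Finset.sum_congr rfl fun j _ => by ring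

lemma cprod_smul_left {N : ℕ} (c : ℂ) (P A : Matrix (Fin N) (Fin N) ℂ) :
    cprod (c • P) A = c • cprod P A := by
  ext i k
  simp only [cprod, Matrix.of_apply, Matrix.smul_apply, smul_eq_mul, Finset.mul_sum]
  exact Finset.sum_congr rfl fun j _ => by ring

lemma cprod_smul_right {N : ℕ} (c : ℂ) (A P : Matrix (Fin N) (Fin N) ℂ) :
    cprod A (c • P) = c • cprod A P := by
  ext i k
  simp only [cprod, Matrix.of_apply, Matrix.smul_apply, smul_eq_mul, Finset.mul_sum]
  exact Finset.sum_congr rfl fun j _ => by ring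

/-- The linear map `P ↦ P • A + A • P` on `N × N` complex matrices. -/
noncomputable def brauerTangentMap (N : ℕ) (A : Matrix (Fin N) (Fin N) ℂ) :
    Matrix (Fin N) (Fin N) ℂ →ₗ[ℂ] Matrix (Fin N) (Fin N) ℂ where
  toFun P := cprod P A + cprod A P
  map_add' P Q := by (try dsimp only); rw [cprod_add_left, cprod_add_right]; abel
  map_smul' c P := by
    (try dsimp only); rw [cprod_smul_left, cprod_smul_right, RingHom.id_apply, smul_add]

/-- The subspace of zero-diagonal matrices. -/
noncomputable def diagZeroSubmodule (N : ℕ) : Submodule ℂ (Matrix (Fin N) (Fin N) ℂ) where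
  carrier := {P | ∀ i, P i i = 0}
  add_mem' := by intro a b ha hb i; simp [Matrix.add_apply, ha i, hb i]
  zero_mem' := by intro i; simp
  smul_mem' := by intro c a ha i; simp [Matrix.smul_apply, ha i]

/-!
For `A = π̲ t` the entry `(a, π b)` of `P • A + A • P` involves only `P a b` and
`P (π a) (π b)`, so the kernel equations split into `2 × 2` systems whose coefficients are read
off the cyclic order of `a, π a, b, π b`. Choosing one free entry per unconstrained direction
(`freeEntries`), a kernel element vanishing on the free entries vanishes (for crossing chords
`{a, π a}`, `{b, π b}` the system has determinant `t b t (π b) - t a t (π a) ≠ 0`), and every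
choice of free entries extends to a kernel element. Applying `π` to the first index, or to the
second one when the first is fixed, pairs each free entry with a non-free one and leaves only
the `r` fixed diagonal entries unpaired, so `2 · #free + r = N ^ 2`.
-/

section CircularOrder

variable {α : Type*} [CircularOrder α] {a b c a' b' : α}

theorem sbtw_of_btw_of_ne (h : btw a b c) (hab : a ≠ b) (hbc : b ≠ c) (hca : c ≠ a) :
    sbtw a b c :=
  sbtw_of_btw_not_btw h fun h' => by
    rcases h.antisymm h' with h | h | h <;> contradiction

theorem btw_iff_not_btw_swap_left (hab : a ≠ b) (hbc : b ≠ c) (hca : c ≠ a) :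
    btw a b c ↔ ¬btw b a c := by
  rw [← sbtw_iff_not_btw, ← sbtw_cyclic]
  exact ⟨fun h => sbtw_of_btw_of_ne h hab hbc hca, SBtw.sbtw.btw⟩

theorem btw_iff_not_btw_swap_right (hab : a ≠ b) (hbc : b ≠ c) (hca : c ≠ a) :
    btw a b c ↔ ¬btw a c b := by
  rw [btw_iff_not_btw_swap_left hab hbc hca, ← btw_cyclic]

theorem btw_of_not_btw_of_not_btw (h₁ : ¬btw a a' b) (h₂ : ¬btw a' a b') : btw a b b' := by
  rw [← sbtw_iff_not_btw, sbtw_cyclic] at h₁ h₂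
  exact (sbtw_trans_right h₁ (sbtw_cyclic_right h₂)).btw

theorem not_btw_of_sbtw_of_sbtw (h₁ : sbtw a b b') (h₂ : sbtw a' a b') :
    ¬btw a a' b ∧ ¬btw a' b' b := by
  rw [← sbtw_iff_not_btw, ← sbtw_iff_not_btw]
  exact ⟨(sbtw_trans_right h₁ h₂.cyclic_left).cyclic_left,
    sbtw_cyclic_right (sbtw_trans_right h₂.cyclic_left.cyclic_left (sbtw_cyclic_right h₁))⟩

end CircularOrder

theorem two_mul_card_add_card_eq_of_perm {α : Type*} [Fintype α] [DecidableEq α]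
    (τ : Equiv.Perm α) {F Z : Finset α} (hZ : ∀ x ∈ Z, τ x = x)
    (hF : ∀ x, x ∈ F ↔ x ∉ Z ∧ τ x ∉ F) :
    2 * #F + #Z = Fintype.card α := by
  have hpart : ∀ x, (if x ∈ F then 1 else 0) + (if τ x ∈ F then 1 else 0) +
      (if x ∈ Z then 1 else 0) = 1 := by
    intro x
    by_cases hx : x ∈ Z
    · have hxF : x ∉ F := fun h => ((hF x).mp h).1 hx
      simp [hx, hZ x hx, hxF]
    by_cases hxF : x ∈ F
    · simp [hx, hxF, ((hF x).mp hxF).2]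
    · have hτx : τ x ∈ F := by_contra fun h => hxF ((hF x).mpr ⟨hx, h⟩)
      simp [hx, hxF, hτx]
  have hτ : ∑ x, (if τ x ∈ F then 1 else 0) = ∑ x, (if x ∈ F then 1 else 0) :=
    Equiv.sum_comp τ fun x => if x ∈ F then 1 else 0
  calc 2 * #F + #Z = ∑ x, ((if x ∈ F then 1 else 0) + (if τ x ∈ F then 1 else 0) +
        (if x ∈ Z then 1 else 0)) := by
        simp only [Finset.sum_add_distrib, hτ, Finset.sum_boole, Finset.filter_mem_eq_inter,
          Finset.univ_inter, Nat.cast_id]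
        ring
    _ = Fintype.card α := by simp [hpart]

instance Fin.decidableBtw {N : ℕ} (a b c : Fin N) : Decidable (btw a b c) :=
  inferInstanceAs (Decidable (a ≤ b ∧ b ≤ c ∨ b ≤ c ∧ c ≤ a ∨ c ≤ a ∧ a ≤ b))

section LinkMatrix

variable {N : ℕ} (π : Equiv.Perm (Fin N)) (t : Fin N → ℂ)

theorem cyc3_iff_btw {i k : Fin N} (h : i ≠ k) (j : Fin N) : cyc3 i j k ↔ btw i j k := by
  rw [cyc3, if_neg h]
  rfl

theorem cprod_apply_self (P Q : Matrix (Fin N) (Fin N) ℂ) (i : Fin N) :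
    cprod P Q i i = P i i * Q i i := by
  rw [cprod, of_apply, Finset.sum_eq_single_of_mem i (by simp [cyc3])]
  intro j hj hji
  simp [cyc3, hji] at hj

/-- The matrix `π̲ t` of the paper, `t` standing for the diagonal matrix with entries `t i`. -/
def linkMatrix : Matrix (Fin N) (Fin N) ℂ :=
  Matrix.of fun i j => if j = π i ∧ j ≠ i then t j else 0

theorem linkMatrix_apply_self (i : Fin N) : linkMatrix π t i i = 0 := by
  simp [linkMatrix]

theorem cprod_linkMatrix_apply (P : Matrix (Fin N) (Fin N) ℂ) (i k : Fin N) :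
    cprod P (linkMatrix π t) i k =
      if π.symm k ≠ k ∧ cyc3 i (π.symm k) k then P i (π.symm k) * t k else 0 := by
  rw [cprod, of_apply, Finset.sum_filter, Finset.sum_eq_single (π.symm k)]
  · by_cases h : π.symm k = k <;> simp [linkMatrix, h, eq_comm (a := k), and_comm]
  · intro j _ hj
    have : k ≠ π j := fun h => hj (by simp [h])
    simp [linkMatrix, this]
  · simp

theorem linkMatrix_cprod_apply (P : Matrix (Fin N) (Fin N) ℂ) (i k : Fin N) :
    cprod (linkMatrix π t) P i k =
      if π i ≠ i ∧ cyc3 i (π i) k then t (π i) * P (π i) k else 0 := by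
  rw [cprod, of_apply, Finset.sum_filter, Finset.sum_eq_single (π i)]
  · by_cases h : π i = i <;> simp [linkMatrix, h, and_comm]
  · intro j _ hj
    simp [linkMatrix, hj]
  · simp

def tangentEntry (P : Matrix (Fin N) (Fin N) ℂ) (a b : Fin N) : ℂ :=
  (if π b ≠ b ∧ btw a b (π b) then t (π b) * P a b else 0) +
    (if π a ≠ a ∧ btw a (π a) (π b) then t (π a) * P (π a) (π b) else 0)

theorem brauerTangentMap_linkMatrix_apply_self (P : Matrix (Fin N) (Fin N) ℂ) (i : Fin N) :
    brauerTangentMap N (linkMatrix π t) P i i = 0 := by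
  show (cprod P _ + cprod _ P) i i = 0
  simp [cprod_apply_self, linkMatrix_apply_self]

theorem brauerTangentMap_linkMatrix_apply (P : Matrix (Fin N) (Fin N) ℂ) {a b : Fin N}
    (h : a ≠ π b) :
    brauerTangentMap N (linkMatrix π t) P a (π b) = tangentEntry π t P a b := by
  show (cprod P _ + cprod _ P) a (π b) = _
  rw [Matrix.add_apply, cprod_linkMatrix_apply, linkMatrix_cprod_apply, Equiv.symm_apply_apply]
  simp only [tangentEntry, cyc3_iff_btw h, ne_comm (a := b), mul_comm (P a b)]

theorem mem_ker_brauerTangentMap_linkMatrix {P : Matrix (Fin N) (Fin N) ℂ} :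
    P ∈ LinearMap.ker (brauerTangentMap N (linkMatrix π t)) ↔
      ∀ a b, a ≠ π b → tangentEntry π t P a b = 0 := by
  rw [LinearMap.mem_ker]
  constructor
  · intro hP a b h
    rw [← brauerTangentMap_linkMatrix_apply π t P h, hP, Matrix.zero_apply]
  · intro hP
    ext a k
    obtain ⟨b, rfl⟩ := π.surjective k
    by_cases h : a = π b
    · rw [h, brauerTangentMap_linkMatrix_apply_self, Matrix.zero_apply]
    · rw [brauerTangentMap_linkMatrix_apply π t P h, hP a b h, Matrix.zero_apply]

end LinkMatrix

section FreeEntries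

variable {N : ℕ} {π : Equiv.Perm (Fin N)}

def freeEntries (π : Equiv.Perm (Fin N)) : Finset (Fin N × Fin N) :=
  univ.filter fun x => x.1 ≠ x.2 ∧
    if π x.1 = x.1 then btw x.1 (π x.2) x.2 else btw x.1 (π x.1) x.2

theorem mem_freeEntries_of_fixed {a b : Fin N} (ha : π a = a) :
    (a, b) ∈ freeEntries π ↔ a ≠ b ∧ btw a (π b) b := by
  simp [freeEntries, ha]

theorem mem_freeEntries_of_not_fixed {a b : Fin N} (ha : π a ≠ a) :
    (a, b) ∈ freeEntries π ↔ a ≠ b ∧ btw a (π a) b := by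
  simp [freeEntries, ha]

theorem notMem_freeEntries_self (a : Fin N) : (a, a) ∉ freeEntries π :=
  fun h => (Finset.mem_filter.mp h).2.1 rfl

def entryPartner (π : Equiv.Perm (Fin N)) : Equiv.Perm (Fin N × Fin N) :=
  Equiv.prodShear π fun a => if π a = a then π else 1

theorem entryPartner_apply (a b : Fin N) :
    entryPartner π (a, b) = (π a, if π a = a then π b else b) := by
  by_cases ha : π a = a <;> simp [entryPartner, ha]

theorem mem_freeEntries_iff_entryPartner (hπ : Function.Involutive π)
    (hfix : (Function.fixedPoints π).Subsingleton) (x : Fin N × Fin N) :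
    x ∈ freeEntries π ↔
      x ∉ (univ.filter fun i => π i = i).diag ∧ entryPartner π x ∉ freeEntries π := by
  obtain ⟨a, b⟩ := x
  by_cases ha : π a = a
  · rw [entryPartner_apply, if_pos ha, ha, mem_freeEntries_of_fixed ha,
      mem_freeEntries_of_fixed ha, hπ b, Finset.mem_diag]
    by_cases hab : a = b
    · subst hab
      simp [ha]
    have hb : π b ≠ b := fun hb => hab (hfix ha hb)
    have hab' : a ≠ π b := fun h => hab (by rw [← ha, h, hπ])
    simp only [Finset.mem_filter, Finset.mem_univ, true_and, ha, hab, hab', ne_eq,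
      not_false_eq_true, and_false, btw_cyclic (a := a) (c := π b)]
    exact btw_iff_not_btw_swap_left hab' hb (Ne.symm hab)
  · have ha' : π (π a) ≠ π a := by rwa [hπ, ne_comm]
    rw [entryPartner_apply, if_neg ha, mem_freeEntries_of_not_fixed ha,
      mem_freeEntries_of_not_fixed ha', hπ a, Finset.mem_diag]
    simp only [Finset.mem_filter, Finset.mem_univ, true_and, ha, false_and, not_false_eq_true]
    by_cases hba : b = a
    · simp [hba, ha, btw_rfl_right]
    by_cases hb : b = π a
    · simp [hb, Ne.symm ha, btw_rfl_right]
    simp only [ne_eq, Ne.symm hba, not_false_eq_true, true_and, Ne.symm hb]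
    exact btw_iff_not_btw_swap_left (Ne.symm ha) (Ne.symm hb) hba

theorem two_mul_card_freeEntries_add_card_fixed (hπ : Function.Involutive π)
    (hfix : (Function.fixedPoints π).Subsingleton) :
    2 * #(freeEntries π) + #(univ.filter fun i => π i = i) = N ^ 2 := by
  have hZ : ∀ x ∈ (univ.filter fun i => π i = i).diag, entryPartner π x = x := by
    rintro ⟨a, b⟩ hx
    obtain ⟨ha, rfl⟩ : π a = a ∧ a = b := by simpa using hx
    simp [entryPartner_apply, ha]
  have := two_mul_card_add_card_eq_of_perm (entryPartner π) hZ
    (mem_freeEntries_iff_entryPartner hπ hfix)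
  rwa [Finset.diag_card, Fintype.card_prod, Fintype.card_fin, ← sq] at this

end FreeEntries
section KernelVanishing

variable {N : ℕ} {π : Equiv.Perm (Fin N)} {t : Fin N → ℂ} {P : Matrix (Fin N) (Fin N) ℂ}

theorem apply_eq_zero_of_notMem_freeEntries_of_not_fixed (hπ : Function.Involutive π)
    (ht0 : ∀ i, t i ≠ 0)
    (htgen : ∀ i k : Fin N, k ≠ i → k ≠ π i → t i * t (π i) ≠ t k * t (π k))
    (hP : ∀ a b, a ≠ π b → tangentEntry π t P a b = 0)
    (hfree : ∀ x ∈ freeEntries π, P x.1 x.2 = 0) {a b : Fin N} (ha : π a ≠ a)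
    (hab : a ≠ b) (hx : (a, b) ∉ freeEntries π) : P a b = 0 := by
  have hab' : π a ≠ b := fun h => hx (by
    rw [mem_freeEntries_of_not_fixed ha, h]; exact ⟨hab, btw_rfl_right⟩)
  have hC : ¬btw a (π a) b := fun h => hx ((mem_freeEntries_of_not_fixed ha).mpr ⟨hab, h⟩)
  have hσ := hP (π a) (π b) (by rwa [hπ b])
  have hγ : btw (π a) a b := (btw_iff_not_btw_swap_left ha hab hab'.symm).mpr hC
  rw [tangentEntry, hπ a, hπ b, if_pos (c := a ≠ π a ∧ _) ⟨ha.symm, hγ⟩] at hσ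
  by_cases hb : π b = b
  · rw [if_neg fun h => h.1 hb.symm, zero_add] at hσ
    exact (mul_eq_zero.mp hσ).resolve_left (ht0 _)
  have hab'' : a ≠ π b := fun h => hab' (by rw [h, hπ])
  have hπab : π a ≠ π b := fun h => hab (π.injective h)
  by_cases hσF : (π a, π b) ∈ freeEntries π
  · rw [hfree _ hσF, mul_zero, ite_self, zero_add] at hσ
    exact (mul_eq_zero.mp hσ).resolve_left (ht0 _)
  -- the chords `{a, π a}` and `{b, π b}` cross, so both equations involve both entries
  have hC' : ¬btw (π a) a (π b) := fun h => hσF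
    ((mem_freeEntries_of_not_fixed (by rwa [hπ, ne_comm])).mpr ⟨hπab, by rwa [hπ]⟩)
  have hE := hP a b hab''
  rw [tangentEntry, if_pos ⟨hb, btw_of_not_btw_of_not_btw hC hC'⟩,
    if_pos ⟨ha, (btw_iff_not_btw_swap_left ha.symm hπab hab''.symm).mpr hC'⟩] at hE
  rw [if_pos ⟨Ne.symm hb, btw_of_not_btw_of_not_btw hC' hC⟩] at hσ
  have hdet : t b * t (π b) - t a * t (π a) ≠ 0 :=
    sub_ne_zero.mpr (htgen a b hab.symm hab'.symm).symm
  have hdetP : (t b * t (π b) - t a * t (π a)) * P a b = 0 := by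
    linear_combination t b * hE - t (π a) * hσ
  exact (mul_eq_zero.mp hdetP).resolve_left hdet

theorem apply_eq_zero_of_notMem_freeEntries (hπ : Function.Involutive π)
    (hfix : (Function.fixedPoints π).Subsingleton) (ht0 : ∀ i, t i ≠ 0)
    (htgen : ∀ i k : Fin N, k ≠ i → k ≠ π i → t i * t (π i) ≠ t k * t (π k))
    (hP : P ∈ LinearMap.ker (brauerTangentMap N (linkMatrix π t)))
    (hfree : ∀ x ∈ freeEntries π, P x.1 x.2 = 0) {a b : Fin N} (hab : a ≠ b)
    (hx : (a, b) ∉ freeEntries π) : P a b = 0 := by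
  rw [mem_ker_brauerTangentMap_linkMatrix] at hP
  by_cases ha : π a = a
  · have hb : π b ≠ b := fun hb => hab (hfix ha hb)
    have hab' : a ≠ π b := fun h => hab (by rw [← ha, h, hπ])
    have hα : btw a b (π b) := by
      rw [mem_freeEntries_of_fixed ha] at hx
      exact (btw_iff_not_btw_swap_right hab hb.symm hab'.symm).mpr fun h => hx ⟨hab, h⟩
    have hE := hP a b hab'
    rw [tangentEntry, if_pos ⟨hb, hα⟩, if_neg fun h => h.1 ha, add_zero] at hE
    exact (mul_eq_zero.mp hE).resolve_left (ht0 _)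
  exact apply_eq_zero_of_notMem_freeEntries_of_not_fixed hπ ht0 htgen hP hfree ha hab hx

end KernelVanishing
section FreeExtension

variable {N : ℕ} {π : Equiv.Perm (Fin N)} {t : Fin N → ℂ} {g : Matrix (Fin N) (Fin N) ℂ}

/-- Off the free entries, the value is the one forced by `tangentEntry π t _ (π a) (π b) = 0`. -/
noncomputable def freeExtension (π : Equiv.Perm (Fin N)) (t : Fin N → ℂ)
    (g : Matrix (Fin N) (Fin N) ℂ) : Matrix (Fin N) (Fin N) ℂ :=
  of fun a b => if (a, b) ∈ freeEntries π then g a b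
    else if π b ≠ b ∧ btw (π a) (π b) b then -(t b / t a * g (π a) (π b)) else 0

theorem freeExtension_of_mem {a b : Fin N} (h : (a, b) ∈ freeEntries π) :
    freeExtension π t g a b = g a b := by
  simp [freeExtension, h]

theorem freeExtension_of_notMem {a b : Fin N} (h : (a, b) ∉ freeEntries π) :
    freeExtension π t g a b =
      if π b ≠ b ∧ btw (π a) (π b) b then -(t b / t a * g (π a) (π b)) else 0 := by
  simp [freeExtension, h]

theorem freeExtension_apply_self (hg : ∀ a b, (a, b) ∉ freeEntries π → g a b = 0)
    (a : Fin N) : freeExtension π t g a a = 0 := by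
  rw [freeExtension_of_notMem (notMem_freeEntries_self a),
    hg _ _ (notMem_freeEntries_self (π a)), mul_zero, neg_zero, ite_self]

theorem tangentEntry_freeExtension_of_not_fixed (hπ : Function.Involutive π)
    (ht0 : ∀ i, t i ≠ 0) (hg : ∀ a b, (a, b) ∉ freeEntries π → g a b = 0) {a b : Fin N}
    (ha : π a ≠ a) (hb : π b ≠ b) (hab : a ≠ b) (hab' : a ≠ π b) :
    tangentEntry π t (freeExtension π t g) a b = 0 := by
  have hπab : π a ≠ π b := fun h => hab (π.injective h)
  have hσ : (π a, π b) ∈ freeEntries π ↔ btw (π a) a (π b) := by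
    rw [mem_freeEntries_of_not_fixed (by rwa [hπ, ne_comm]), hπ a]
    exact and_iff_right hπab
  have hβ : btw a (π a) (π b) ↔ ¬btw (π a) a (π b) :=
    btw_iff_not_btw_swap_left ha.symm hπab hab'.symm
  rw [tangentEntry]
  by_cases hσF : btw (π a) a (π b)
  · rw [if_neg (c := π a ≠ a ∧ _) fun h => hβ.mp h.2 hσF, add_zero]
    split_ifs with hα
    · obtain ⟨hC, hασ⟩ := not_btw_of_sbtw_of_sbtw
        (sbtw_of_btw_of_ne hα.2 hab hb.symm hab'.symm)
        (sbtw_of_btw_of_ne hσF ha hab' hπab.symm)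
      rw [freeExtension_of_notMem fun h => hC ((mem_freeEntries_of_not_fixed ha).mp h).2,
        if_neg fun h => hασ h.2, mul_zero]
    · rfl
  rw [if_pos (c := π a ≠ a ∧ _) ⟨ha, hβ.mpr hσF⟩,
    freeExtension_of_notMem (mt hσ.mp hσF)]
  simp only [hπ a, hπ b]
  by_cases hα : btw a b (π b)
  · have hS : freeExtension π t g a b = g a b := by
      by_cases hx : (a, b) ∈ freeEntries π
      · exact freeExtension_of_mem hx
      · rw [freeExtension_of_notMem hx, hg _ _ hx, hg _ _ (mt hσ.mp hσF)]
        simp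
    rw [if_pos ⟨hb, hα⟩, if_pos ⟨hb.symm, hα⟩, hS]
    field_simp [ht0 (π a)]
    ring
  · simp [hα]

theorem freeExtension_mem_ker (hπ : Function.Involutive π) (ht0 : ∀ i, t i ≠ 0)
    (hg : ∀ a b, (a, b) ∉ freeEntries π → g a b = 0) :
    freeExtension π t g ∈ LinearMap.ker (brauerTangentMap N (linkMatrix π t)) := by
  rw [mem_ker_brauerTangentMap_linkMatrix]
  intro a b hab'
  by_cases hab : a = b
  · subst hab
    simp [tangentEntry, freeExtension_apply_self hg]
  rw [tangentEntry]
  by_cases ha : π a = a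
  · rw [if_neg (c := π a ≠ a ∧ _) fun h => h.1 ha, add_zero]
    split_ifs with hα
    · have hC : ¬btw a (π b) b := (btw_iff_not_btw_swap_right hab hα.1.symm hab'.symm).mp hα.2
      rw [freeExtension_of_notMem fun h => hC ((mem_freeEntries_of_fixed ha).mp h).2,
        if_neg fun h => hC (ha ▸ h.2), mul_zero]
    · rfl
  by_cases hb : π b = b
  · have hπab : π a ≠ b := fun h => hab' (by rw [← h, hπ])
    rw [if_neg (c := π b ≠ b ∧ _) fun h => h.1 hb, zero_add]
    split_ifs with hβ
    · rw [hb] at hβ ⊢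
      have hC : ¬btw (π a) a b := fun h =>
        (btw_iff_not_btw_swap_left ha hab hπab.symm).mp h hβ.2
      have hx : (π a, b) ∉ freeEntries π := fun h => hC (by
        simpa only [hπ a] using ((mem_freeEntries_of_not_fixed (by rwa [hπ, ne_comm])).mp h).2)
      rw [freeExtension_of_notMem hx, if_neg fun h => h.1 hb, mul_zero]
    · rfl
  rw [← tangentEntry]
  exact tangentEntry_freeExtension_of_not_fixed hπ ht0 hg ha hb hab hab'

end FreeExtension
theorem finrank_ker_brauerTangentMap_inf_diagZero {N : ℕ} {π : Equiv.Perm (Fin N)}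
    {t : Fin N → ℂ} (hπ : Function.Involutive π)
    (hfix : (Function.fixedPoints π).Subsingleton) (ht0 : ∀ i, t i ≠ 0)
    (htgen : ∀ i k : Fin N, k ≠ i → k ≠ π i → t i * t (π i) ≠ t k * t (π k)) :
    Module.finrank ℂ ↥(LinearMap.ker (brauerTangentMap N (linkMatrix π t)) ⊓
      diagZeroSubmodule N) = #(freeEntries π) := by
  let restrict : ↥(LinearMap.ker (brauerTangentMap N (linkMatrix π t)) ⊓
      diagZeroSubmodule N) →ₗ[ℂ] freeEntries π → ℂ :=
    { toFun := fun P x => (P : Matrix (Fin N) (Fin N) ℂ) x.1.1 x.1.2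
      map_add' := fun _ _ => rfl
      map_smul' := fun _ _ => rfl }
  have hinj : Function.Injective restrict := by
    refine (injective_iff_map_eq_zero restrict).mpr fun ⟨P, hPker, hPdiag⟩ hP => ?_
    have hfree : ∀ x ∈ freeEntries π, P x.1 x.2 = 0 := fun x hx => congrFun hP ⟨x, hx⟩
    ext a b
    by_cases hab : a = b
    · exact hab ▸ hPdiag a
    by_cases hx : (a, b) ∈ freeEntries π
    · exact hfree _ hx
    exact apply_eq_zero_of_notMem_freeEntries hπ hfix ht0 htgen hPker hfree hab hx
  have hsurj : Function.Surjective restrict := by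
    intro g
    let G : Matrix (Fin N) (Fin N) ℂ := fun a b =>
      if h : (a, b) ∈ freeEntries π then g ⟨_, h⟩ else 0
    have hG : ∀ a b, (a, b) ∉ freeEntries π → G a b = 0 := fun a b h => dif_neg h
    refine ⟨⟨freeExtension π t G, freeExtension_mem_ker hπ ht0 hG,
      freeExtension_apply_self hG⟩, funext fun x => ?_⟩
    exact (freeExtension_of_mem x.2).trans (dif_pos x.2)
  rw [(LinearEquiv.ofBijective restrict ⟨hinj, hsurj⟩).finrank_eq,
    Module.finrank_fintype_fun_eq_card, Fintype.card_coe]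

theorem brauer_tangent_space_dimension_general (n r N : ℕ) (hr : r = 0 ∨ r = 1)
    (hN : N = 2 * n + r)
    (π : Equiv.Perm (Fin N)) (hinv : ∀ i, π (π i) = i)
    (hfix : (Finset.univ.filter (fun i => π i = i)).card = r)
    (t : Fin N → ℂ) (ht0 : ∀ i, t i ≠ 0)
    (htgen : ∀ i k : Fin N, k ≠ i → k ≠ π i → t i * t (π i) ≠ t k * t (π k))
    (A : Matrix (Fin N) (Fin N) ℂ)
    (hA : ∀ i j, A i j = if j = π i ∧ j ≠ i then t j else 0) :
    Module.finrank ℂ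
      ↥(LinearMap.ker (brauerTangentMap N A) ⊓ diagZeroSubmodule N) = N ^ 2 / 2 := by
  obtain rfl : A = linkMatrix π t := Matrix.ext hA
  have hsub : (Function.fixedPoints π).Subsingleton := by
    have hle : #(univ.filter fun i => π i = i) ≤ 1 := by omega
    exact fun a ha b hb =>
      Finset.card_le_one.mp hle a (by simpa using ha.eq) b (by simpa using hb.eq)
  have hcard := two_mul_card_freeEntries_add_card_fixed hinv hsub
  rw [hfix] at hcard
  rw [finrank_ker_brauerTangentMap_inf_diagZero hinv hsub ht0 htgen]
  subst hN
  rcases hr with rfl | rfl <;> (ring_nf at hcard ⊢; omega)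

/-- The Zariski tangent space computation: write `N = 2n + r`, `r ∈ {0,1}`; let `π` be a
link pattern, `t` generic diagonal entries (nonzero, with `t_i t_{π(i)} ≠ t_k t_{π(k)}`
whenever `k ∉ {i, π(i)}`), and `A = π̲ t` the matrix with `A_{ij} = t_j` iff `j = π(i)`,
`j ≠ i`.  Then the kernel of `P ↦ P • A + A • P` on the space of zero-diagonal matrices
has dimension `⌊N²/2⌋`. -/
theorem brauer_tangent_space_dimension (n r N : ℕ) (hr : r = 0 ∨ r = 1)
    (hN : N = 2 * n + r) (hpos : 0 < N)
    (π : Equiv.Perm (Fin N)) (hinv : ∀ i, π (π i) = i)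
    (hfix : (Finset.univ.filter (fun i => π i = i)).card = r)
    (t : Fin N → ℂ) (ht0 : ∀ i, t i ≠ 0)
    (htgen : ∀ i k : Fin N, k ≠ i → k ≠ π i → t i * t (π i) ≠ t k * t (π k))
    (A : Matrix (Fin N) (Fin N) ℂ)
    (hA : ∀ i j, A i j = if j = π i ∧ j ≠ i then t j else 0) :
    Module.finrank ℂ
      ↥(LinearMap.ker (brauerTangentMap N A) ⊓ diagZeroSubmodule N) = N ^ 2 / 2 :=
  brauer_tangent_space_dimension_general n r N hr hN π hinv hfix t ht0 htgen A hA
end
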